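/- Let π be an unsigned permutation of size n with b_τ(π) transposition breakpoints, let π' = (+π_1 +π_2 … +π_n) be the signed permutation obtained by giving every element of π the sign '+', and let w_ρ, w_τ be positive weights with w_τ/w_ρ ≤ 3/2. Then there exists a sequence S of transpositions transforming π into ι^n with 3·|S| = b_τ(π) if and only if 3·d^w_{M6}(π') ≤ w_τ · b_τ(π), where M6 = {reversals, transpositions, inverse transpositions, revrevs} acts on signed permutations. -/

import Mathlib

/-- The four kinds of rearrangement operations considered:
reversals, transpositions, inverse transpositions and revrevs. -/
inductive RearrOp : Type
  | rev
  | transp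
  | invtransp
  | revrev
deriving DecidableEq

/-- `π` is (the extended version of) a signed permutation of size `n`:
`π 0 = +0`, `π (n+1) = +(n+1)`, and on positions `1, …, n` the values have pairwise
distinct absolute values lying in `{1, …, n}`. -/
def IsSPerm (n : ℕ) (π : ℕ → ℤ) : Prop :=
  π 0 = 0 ∧ π (n + 1) = (n : ℤ) + 1 ∧
  (∀ i : ℕ, 1 ≤ i → i ≤ n → 1 ≤ |π i| ∧ |π i| ≤ (n : ℤ)) ∧
  (∀ i j : ℕ, 1 ≤ i → i ≤ n → 1 ≤ j → j ≤ n → |π i| = |π j| → i = j)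

/-- `π` is (the extended version of) an unsigned permutation of size `n`. -/
def IsUPerm (n : ℕ) (π : ℕ → ℕ) : Prop :=
  π 0 = 0 ∧ π (n + 1) = n + 1 ∧
  (∀ i : ℕ, 1 ≤ i → i ≤ n → 1 ≤ π i ∧ π i ≤ n) ∧
  (∀ i j : ℕ, 1 ≤ i → i ≤ n → 1 ≤ j → j ≤ n → π i = π j → i = j)

/-- Signed reversal `ρ(i,j)`, `1 ≤ i ≤ j ≤ n`: replaces `(π_i … π_j)` by `(−π_j … −π_i)`. -/
def SRev (n : ℕ) (π π' : ℕ → ℤ) : Prop :=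
  ∃ i j : ℕ, 1 ≤ i ∧ i ≤ j ∧ j ≤ n ∧
    (∀ p : ℕ, i ≤ p → p ≤ j → π' p = - π (i + j - p)) ∧
    (∀ p : ℕ, p < i ∨ j < p → π' p = π p)

/-- Transposition `τ(i,j,k)`, `1 ≤ i < j < k ≤ n+1`: exchanges the adjacent segments
`(π_i … π_{j−1})` and `(π_j … π_{k−1})`. -/
def STransp (n : ℕ) (π π' : ℕ → ℤ) : Prop :=
  ∃ i j k : ℕ, 1 ≤ i ∧ i < j ∧ j < k ∧ k ≤ n + 1 ∧
    (∀ p : ℕ, i ≤ p → p < i + (k - j) → π' p = π (p + (j - i))) ∧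
    (∀ p : ℕ, i + (k - j) ≤ p → p < k → π' p = π (p - (k - j))) ∧
    (∀ p : ℕ, p < i ∨ k ≤ p → π' p = π p)

/-- Signed inverse transposition (type 1 or type 2): exchanges the two adjacent segments
`(π_i … π_{j−1})` and `(π_j … π_{k−1})` and additionally reverses (and negates) one of them. -/
def SInvTransp (n : ℕ) (π π' : ℕ → ℤ) : Prop :=
  ∃ i j k : ℕ, 1 ≤ i ∧ i < j ∧ j < k ∧ k ≤ n + 1 ∧
    (((∀ p : ℕ, i ≤ p → p < i + (k - j) → π' p = π (p + (j - i))) ∧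
      (∀ p : ℕ, i + (k - j) ≤ p → p < k → π' p = - π (i + k - 1 - p))) ∨
     ((∀ p : ℕ, i ≤ p → p < i + (k - j) → π' p = - π (i + k - 1 - p)) ∧
      (∀ p : ℕ, i + (k - j) ≤ p → p < k → π' p = π (p - (k - j))))) ∧
    (∀ p : ℕ, p < i ∨ k ≤ p → π' p = π p)

/-- Signed revrev `ρρ(i,j,k)`: reverses (and negates) each of the two adjacent segments
`(π_i … π_{j−1})` and `(π_j … π_{k−1})` in place, without exchanging them. -/
def SRevRev (n : ℕ) (π π' : ℕ → ℤ) : Prop :=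
  ∃ i j k : ℕ, 1 ≤ i ∧ i < j ∧ j < k ∧ k ≤ n + 1 ∧
    (∀ p : ℕ, i ≤ p → p < j → π' p = - π (i + j - 1 - p)) ∧
    (∀ p : ℕ, j ≤ p → p < k → π' p = - π (j + k - 1 - p)) ∧
    (∀ p : ℕ, p < i ∨ k ≤ p → π' p = π p)

/-- Unsigned reversal `ρ(i,j)`. -/
def URev (n : ℕ) (π π' : ℕ → ℕ) : Prop :=
  ∃ i j : ℕ, 1 ≤ i ∧ i ≤ j ∧ j ≤ n ∧
    (∀ p : ℕ, i ≤ p → p ≤ j → π' p = π (i + j - p)) ∧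
    (∀ p : ℕ, p < i ∨ j < p → π' p = π p)

/-- Unsigned transposition `τ(i,j,k)`. -/
def UTransp (n : ℕ) (π π' : ℕ → ℕ) : Prop :=
  ∃ i j k : ℕ, 1 ≤ i ∧ i < j ∧ j < k ∧ k ≤ n + 1 ∧
    (∀ p : ℕ, i ≤ p → p < i + (k - j) → π' p = π (p + (j - i))) ∧
    (∀ p : ℕ, i + (k - j) ≤ p → p < k → π' p = π (p - (k - j))) ∧
    (∀ p : ℕ, p < i ∨ k ≤ p → π' p = π p)

/-- Unsigned inverse transposition (type 1 or type 2). -/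
def UInvTransp (n : ℕ) (π π' : ℕ → ℕ) : Prop :=
  ∃ i j k : ℕ, 1 ≤ i ∧ i < j ∧ j < k ∧ k ≤ n + 1 ∧
    (((∀ p : ℕ, i ≤ p → p < i + (k - j) → π' p = π (p + (j - i))) ∧
      (∀ p : ℕ, i + (k - j) ≤ p → p < k → π' p = π (i + k - 1 - p))) ∨
     ((∀ p : ℕ, i ≤ p → p < i + (k - j) → π' p = π (i + k - 1 - p)) ∧
      (∀ p : ℕ, i + (k - j) ≤ p → p < k → π' p = π (p - (k - j))))) ∧
    (∀ p : ℕ, p < i ∨ k ≤ p → π' p = π p)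

/-- Unsigned revrev `ρρ(i,j,k)`. -/
def URevRev (n : ℕ) (π π' : ℕ → ℕ) : Prop :=
  ∃ i j k : ℕ, 1 ≤ i ∧ i < j ∧ j < k ∧ k ≤ n + 1 ∧
    (∀ p : ℕ, i ≤ p → p < j → π' p = π (i + j - 1 - p)) ∧
    (∀ p : ℕ, j ≤ p → p < k → π' p = π (j + k - 1 - p)) ∧
    (∀ p : ℕ, p < i ∨ k ≤ p → π' p = π p)

def sOpRel (n : ℕ) : RearrOp → (ℕ → ℤ) → (ℕ → ℤ) → Prop
  | RearrOp.rev => SRev n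
  | RearrOp.transp => STransp n
  | RearrOp.invtransp => SInvTransp n
  | RearrOp.revrev => SRevRev n

def uOpRel (n : ℕ) : RearrOp → (ℕ → ℕ) → (ℕ → ℕ) → Prop
  | RearrOp.rev => URev n
  | RearrOp.transp => UTransp n
  | RearrOp.invtransp => UInvTransp n
  | RearrOp.revrev => URevRev n

/-- The list of operations `l` transforms the signed permutation `π` into the identity. -/
def SSorts (n : ℕ) : List RearrOp → (ℕ → ℤ) → Prop
  | [], π => ∀ p : ℕ, p ≤ n + 1 → π p = (p : ℤ)
  | op :: l, π => ∃ π' : ℕ → ℤ, sOpRel n op π π' ∧ SSorts n l π'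

/-- The list of operations `l` transforms the unsigned permutation `π` into the identity. -/
def USorts (n : ℕ) : List RearrOp → (ℕ → ℕ) → Prop
  | [], π => ∀ p : ℕ, p ≤ n + 1 → π p = p
  | op :: l, π => ∃ π' : ℕ → ℕ, uOpRel n op π π' ∧ USorts n l π'

/-- A sequence of `s` (unsigned) transpositions transforms `π` into the identity. -/
def UTranspSorts (n : ℕ) : ℕ → (ℕ → ℕ) → Prop
  | 0, π => ∀ p : ℕ, p ≤ n + 1 → π p = p
  | s + 1, π => ∃ π' : ℕ → ℕ, UTransp n π π' ∧ UTranspSorts n s π'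

/-- The cost of an operation: `wr` for a reversal, `wt` for a transposition,
inverse transposition or revrev. -/
noncomputable def opCost (wr wt : ℝ) (op : RearrOp) : ENNReal :=
  if op = RearrOp.rev then ENNReal.ofReal wr else ENNReal.ofReal wt

/-- The total cost of a sequence of operations. -/
noncomputable def seqCost (wr wt : ℝ) (l : List RearrOp) : ENNReal :=
  (l.map (opCost wr wt)).sum

/-- The weighted distance `d^w_M(π)` for a signed permutation `π`: the minimum total cost
of a sequence of operations from the model `M` transforming `π` into the identity
(`∞` if no such sequence exists). -/
noncomputable def sWDist (n : ℕ) (M : Set RearrOp) (wr wt : ℝ) (π : ℕ → ℤ) : ENNReal :=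
  sInf {c : ENNReal |
    ∃ l : List RearrOp, (∀ op ∈ l, op ∈ M) ∧ SSorts n l π ∧ c = seqCost wr wt l}

/-- The weighted distance `d^w_M(π)` for an unsigned permutation `π`. -/
noncomputable def uWDist (n : ℕ) (M : Set RearrOp) (wr wt : ℝ) (π : ℕ → ℕ) : ENNReal :=
  sInf {c : ENNReal |
    ∃ l : List RearrOp, (∀ op ∈ l, op ∈ M) ∧ USorts n l π ∧ c = seqCost wr wt l}

/-- `b(π)`: number of (signed) breakpoints of the signed permutation `π`. -/
def bS (n : ℕ) (π : ℕ → ℤ) : ℕ :=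
  ((Finset.range (n + 1)).filter (fun i => π (i + 1) - π i ≠ 1)).card

/-- `b(π)`: number of unsigned-reversal breakpoints, i.e. pairs with `|π_{i+1} − π_i| ≠ 1`. -/
def bU (n : ℕ) (π : ℕ → ℕ) : ℕ :=
  ((Finset.range (n + 1)).filter
    (fun i => ¬ (π (i + 1) = π i + 1 ∨ π i = π (i + 1) + 1))).card

/-- `b_τ(π)`: number of transposition breakpoints, i.e. pairs with `π_{i+1} − π_i ≠ 1`. -/
def bTU (n : ℕ) (π : ℕ → ℕ) : ℕ :=
  ((Finset.range (n + 1)).filter (fun i => π (i + 1) ≠ π i + 1)).card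

def M1 : Set RearrOp := {RearrOp.transp, RearrOp.invtransp}
def M2 : Set RearrOp := {RearrOp.rev, RearrOp.transp, RearrOp.invtransp}
def M3 : Set RearrOp := {RearrOp.transp, RearrOp.revrev}
def M4 : Set RearrOp := {RearrOp.rev, RearrOp.transp, RearrOp.revrev}
def M5 : Set RearrOp := {RearrOp.transp, RearrOp.invtransp, RearrOp.revrev}
def M6 : Set RearrOp := {RearrOp.rev, RearrOp.transp, RearrOp.invtransp, RearrOp.revrev}

/-!
Every operation of `M6` cuts the signed permutation at two or three junctions and puts the
blocks back, each one shifted or reversed with its signs flipped, so every adjacency inside a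
block survives: a reversal removes at most two breakpoints and any other operation at most
three. As `w_τ / w_ρ ≤ 3 / 2`, every operation therefore costs at least `w_τ / 3` per removed
breakpoint, so `d^w_{M6}(π') ≥ w_τ · b_τ(π) / 3`, with equality for a sorting by transpositions
that each remove three breakpoints.

Conversely, a reversal, inverse transposition or revrev applied to a permutation with only
positive signs negates a block, and both ends of that block become breakpoints; so it removes at
most one breakpoint (none for a reversal) and costs at least `w_τ / 3` more than its share. A
sequence of cost below `w_τ · (b_τ(π) + 1) / 3` thus consists of transpositions removing three
breakpoints each, and these keep all signs positive, i.e. they are transpositions of `π`.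
-/

open Finset

def PreservesAdjacencyAt (f : ℕ → ℕ) (r : ℕ → Prop) (p : ℕ) : Prop :=
  (¬ r p ∧ ¬ r (p + 1) ∧ f (p + 1) = f p + 1) ∨ (r p ∧ r (p + 1) ∧ f p = f (p + 1) + 1)

open Classical in
/-- Every operation of `M6` is such a reindexing, with `J` the two or three junctions at which
it cuts and glues blocks. -/
structure IsSignedReindexing (n : ℕ) (σ τ : ℕ → ℤ) (f : ℕ → ℕ) (r : ℕ → Prop)
    (J : Finset ℕ) : Prop where
  apply_eq : ∀ p ≤ n + 1, τ p = if r p then -σ (f p) else σ (f p)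
  map_le : ∀ p ≤ n + 1, f p ≤ n + 1
  injOn : Set.InjOn f (Set.Iic (n + 1))
  map_zero : f 0 = 0
  not_r_zero : ¬ r 0
  preservesAdjacencyAt : ∀ p ≤ n, p ∉ J → PreservesAdjacencyAt f r p

namespace IsSignedReindexing

variable {n : ℕ} {σ τ : ℕ → ℤ} {f : ℕ → ℕ} {r : ℕ → Prop} {J : Finset ℕ}

theorem sub_eq_of_preservesAdjacencyAt (h : IsSignedReindexing n σ τ f r J) {p : ℕ}
    (hp : p ≤ n) (hadj : PreservesAdjacencyAt f r p) :
    min (f p) (f (p + 1)) ≤ n ∧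
      σ (min (f p) (f (p + 1)) + 1) - σ (min (f p) (f (p + 1))) = τ (p + 1) - τ p := by
  have hle := h.map_le p (by omega)
  have hle' := h.map_le (p + 1) (by omega)
  rw [h.apply_eq p (by omega), h.apply_eq (p + 1) (by omega)]
  rcases hadj with ⟨hp, hp1, hf⟩ | ⟨hp, hp1, hf⟩
  · rw [min_eq_left (by omega : f p ≤ f (p + 1)), ← hf, if_neg hp, if_neg hp1]
    exact ⟨by omega, rfl⟩
  · rw [min_eq_right (by omega : f (p + 1) ≤ f p), ← hf, if_pos hp, if_pos hp1]
    exact ⟨by omega, by ring⟩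

theorem bS_add_card_le (h : IsSignedReindexing n σ τ f r J) :
    bS n σ + #{p ∈ J | p ≤ n ∧ τ (p + 1) - τ p ≠ 1} ≤ bS n τ + #J := by
  set K := {p ∈ J | p ≤ n ∧ τ (p + 1) - τ p ≠ 1}
  set adj : (ℕ → ℤ) → Finset ℕ := fun ρ => {p ∈ range (n + 1) | ρ (p + 1) - ρ p = 1}
  have hcount : ∀ ρ, bS n ρ + #(adj ρ) = n + 1 := fun ρ => by
    rw [bS, add_comm, card_filter_add_card_filter_not, card_range]
  have hK : #(J \ K) + #K = #J := card_sdiff_add_card_eq_card (filter_subset _ _)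
  -- `p ↦ min (f p) (f (p + 1))` sends the adjacencies of `τ` off `J` to adjacencies of `σ`.
  have hmaps : Set.MapsTo (fun p => min (f p) (f (p + 1))) ↑(adj τ \ J) ↑(adj σ) := by
    intro p hp
    simp only [adj, mem_coe, mem_sdiff, mem_filter, mem_range] at hp ⊢
    obtain ⟨hle, hsub⟩ :=
      h.sub_eq_of_preservesAdjacencyAt (by omega) (h.preservesAdjacencyAt p (by omega) hp.2)
    exact ⟨by omega, hsub.trans hp.1.2⟩
  have hinj : Set.InjOn (fun p => min (f p) (f (p + 1))) ↑(adj τ \ J) := by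
    intro p hp q hq hpq
    simp only [adj, mem_coe, mem_sdiff, mem_filter, mem_range] at hp hq
    have hadj_p := h.preservesAdjacencyAt p (by omega) hp.2
    have hadj_q := h.preservesAdjacencyAt q (by omega) hq.2
    unfold PreservesAdjacencyAt at hadj_p hadj_q
    simp only at hpq
    have inj : ∀ a b, a ≤ n + 1 → b ≤ n + 1 → f a = f b → a = b := fun a b ha hb =>
      @h.injOn a ha b hb
    have hp' : f p = f q ∨ f p = f (q + 1) := by omega
    have hp1' : f (p + 1) = f q ∨ f (p + 1) = f (q + 1) := by omega
    rcases hp' with h₁ | h₁ <;> rcases hp1' with h₂ | h₂ <;>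
      have := inj _ _ (by omega) (by omega) h₁ <;> have := inj _ _ (by omega) (by omega) h₂ <;>
      omega
  have hsplit : #(adj τ) ≤ #(adj τ \ J) + #(J \ K) := by
    refine (card_le_card fun p hp => ?_).trans (card_union_le _ _)
    by_cases hpJ : p ∈ J
    · simp only [adj, mem_filter, mem_range] at hp
      simp [K, hpJ, hp.2]
    · exact mem_union_left _ (mem_sdiff.2 ⟨hp, hpJ⟩)
  have := card_le_card_of_injOn _ hmaps hinj
  have := hcount σ
  have := hcount τ
  omega

theorem one_le_map (h : IsSignedReindexing n σ τ f r J) {p : ℕ} (hp₀ : 1 ≤ p) (hp : p ≤ n + 1) :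
    1 ≤ f p := by
  by_contra hfp
  have hp0 : p = 0 := h.injOn (Set.mem_Iic.2 hp) (Set.mem_Iic.2 (Nat.zero_le _))
    (by rw [h.map_zero]; omega)
  omega

open Classical in
/-- When `σ` has no negative entries, every change of sign along `τ` is a junction and a
breakpoint of `τ`. -/
theorem bS_add_card_signChanges_le (h : IsSignedReindexing n σ τ f r J)
    (hσ₀ : ∀ q ≤ n + 1, 0 ≤ σ q) (hσ₁ : ∀ q, 1 ≤ q → q ≤ n + 1 → 1 ≤ σ q) :
    bS n σ + #{p ∈ range (n + 1) | ¬ (r p ↔ r (p + 1))} ≤ bS n τ + #J := by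
  refine le_trans (Nat.add_le_add_left (card_le_card fun p hp => ?_) _) h.bS_add_card_le
  simp only [mem_filter, mem_range] at hp ⊢
  have hpJ : p ∈ J := by
    by_contra hpJ
    rcases h.preservesAdjacencyAt p (by omega) hpJ with ⟨h₁, h₂, -⟩ | ⟨h₁, h₂, -⟩ <;> tauto
  refine ⟨hpJ, by omega, ?_⟩
  have hf := h.map_le p (by omega)
  have hf' := h.map_le (p + 1) (by omega)
  rw [h.apply_eq p (by omega), h.apply_eq (p + 1) (by omega)]
  by_cases hr : r p
  · have hp0 : p ≠ 0 := fun hp0 => h.not_r_zero (hp0 ▸ hr)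
    have := hσ₁ (f p) (h.one_le_map (by omega) (by omega)) hf
    have := hσ₁ (f (p + 1)) (h.one_le_map (by omega) (by omega)) hf'
    rw [if_pos hr, if_neg (by tauto)]
    omega
  · have := hσ₀ _ hf
    have := hσ₀ _ hf'
    rw [if_neg hr, if_pos (by tauto)]
    omega

end IsSignedReindexing

section Operations

variable {n : ℕ} {σ τ : ℕ → ℤ} {i j k : ℕ}

theorem isSignedReindexing_rev (hi : 1 ≤ i) (hij : i ≤ j) (hj : j ≤ n)
    (hin : ∀ p, i ≤ p → p ≤ j → τ p = -σ (i + j - p)) (hout : ∀ p, p < i ∨ j < p → τ p = σ p) :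
    IsSignedReindexing n σ τ (fun p => if i ≤ p ∧ p ≤ j then i + j - p else p)
      (fun p => i ≤ p ∧ p ≤ j) {i - 1, j} where
  apply_eq p _ := by
    split_ifs with hp
    · exact hin p hp.1 hp.2
    · exact hout p (by omega)
  map_le p _ := by split_ifs <;> omega
  injOn p hp q hq hpq := by
    simp only [Set.mem_Iic] at hp hq
    beta_reduce at hpq
    split_ifs at hpq <;> omega
  map_zero := by split_ifs <;> omega
  not_r_zero := by omega
  preservesAdjacencyAt p _ hp := by
    simp only [mem_insert, mem_singleton] at hp
    unfold PreservesAdjacencyAt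
    beta_reduce
    split_ifs <;> omega

theorem isSignedReindexing_transp (hi : 1 ≤ i) (hij : i < j) (hjk : j < k) (hk : k ≤ n + 1)
    (hleft : ∀ p, i ≤ p → p < i + (k - j) → τ p = σ (p + (j - i)))
    (hright : ∀ p, i + (k - j) ≤ p → p < k → τ p = σ (p - (k - j)))
    (hout : ∀ p, p < i ∨ k ≤ p → τ p = σ p) :
    IsSignedReindexing n σ τ
      (fun p => if i ≤ p ∧ p < i + (k - j) then p + (j - i)
        else if i + (k - j) ≤ p ∧ p < k then p - (k - j) else p)
      (fun _ => False) {i - 1, i + (k - j) - 1, k - 1} where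
  apply_eq p _ := by
    rw [if_neg not_false]
    split_ifs <;>
      first
      | omega
      | exact hleft p (by omega) (by omega)
      | exact hright p (by omega) (by omega)
      | exact hout p (by omega)
  map_le p _ := by split_ifs <;> omega
  injOn p hp q hq hpq := by
    simp only [Set.mem_Iic] at hp hq
    beta_reduce at hpq
    split_ifs at hpq <;> omega
  map_zero := by split_ifs <;> omega
  not_r_zero := id
  preservesAdjacencyAt p _ hp := by
    simp only [mem_insert, mem_singleton] at hp
    simp only [PreservesAdjacencyAt, not_false_eq_true, true_and, false_and, or_false]
    split_ifs <;> omega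

theorem isSignedReindexing_invtransp_right (hi : 1 ≤ i) (hij : i < j) (hjk : j < k)
    (hk : k ≤ n + 1)
    (hleft : ∀ p, i ≤ p → p < i + (k - j) → τ p = σ (p + (j - i)))
    (hright : ∀ p, i + (k - j) ≤ p → p < k → τ p = -σ (i + k - 1 - p))
    (hout : ∀ p, p < i ∨ k ≤ p → τ p = σ p) :
    IsSignedReindexing n σ τ
      (fun p => if i ≤ p ∧ p < i + (k - j) then p + (j - i)
        else if i + (k - j) ≤ p ∧ p < k then i + k - 1 - p else p)
      (fun p => i + (k - j) ≤ p ∧ p < k) {i - 1, i + (k - j) - 1, k - 1} where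
  apply_eq p _ := by
    split_ifs <;>
      first
      | omega
      | exact hleft p (by omega) (by omega)
      | exact hright p (by omega) (by omega)
      | exact hout p (by omega)
  map_le p _ := by split_ifs <;> omega
  injOn p hp q hq hpq := by
    simp only [Set.mem_Iic] at hp hq
    beta_reduce at hpq
    split_ifs at hpq <;> omega
  map_zero := by split_ifs <;> omega
  not_r_zero := by omega
  preservesAdjacencyAt p _ hp := by
    simp only [mem_insert, mem_singleton] at hp
    unfold PreservesAdjacencyAt
    beta_reduce
    split_ifs <;> omega

theorem isSignedReindexing_invtransp_left (hi : 1 ≤ i) (hij : i < j) (hjk : j < k)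
    (hk : k ≤ n + 1)
    (hleft : ∀ p, i ≤ p → p < i + (k - j) → τ p = -σ (i + k - 1 - p))
    (hright : ∀ p, i + (k - j) ≤ p → p < k → τ p = σ (p - (k - j)))
    (hout : ∀ p, p < i ∨ k ≤ p → τ p = σ p) :
    IsSignedReindexing n σ τ
      (fun p => if i ≤ p ∧ p < i + (k - j) then i + k - 1 - p
        else if i + (k - j) ≤ p ∧ p < k then p - (k - j) else p)
      (fun p => i ≤ p ∧ p < i + (k - j)) {i - 1, i + (k - j) - 1, k - 1} where
  apply_eq p _ := by
    split_ifs <;>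
      first
      | omega
      | exact hleft p (by omega) (by omega)
      | exact hright p (by omega) (by omega)
      | exact hout p (by omega)
  map_le p _ := by split_ifs <;> omega
  injOn p hp q hq hpq := by
    simp only [Set.mem_Iic] at hp hq
    beta_reduce at hpq
    split_ifs at hpq <;> omega
  map_zero := by split_ifs <;> omega
  not_r_zero := by omega
  preservesAdjacencyAt p _ hp := by
    simp only [mem_insert, mem_singleton] at hp
    unfold PreservesAdjacencyAt
    beta_reduce
    split_ifs <;> omega

theorem isSignedReindexing_revrev (hi : 1 ≤ i) (hij : i < j) (hjk : j < k) (hk : k ≤ n + 1)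
    (hleft : ∀ p, i ≤ p → p < j → τ p = -σ (i + j - 1 - p))
    (hright : ∀ p, j ≤ p → p < k → τ p = -σ (j + k - 1 - p))
    (hout : ∀ p, p < i ∨ k ≤ p → τ p = σ p) :
    IsSignedReindexing n σ τ
      (fun p => if i ≤ p ∧ p < j then i + j - 1 - p
        else if j ≤ p ∧ p < k then j + k - 1 - p else p)
      (fun p => i ≤ p ∧ p < k) {i - 1, j - 1, k - 1} where
  apply_eq p _ := by
    split_ifs <;>
      first
      | omega
      | exact hleft p (by omega) (by omega)
      | exact hright p (by omega) (by omega)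
      | exact hout p (by omega)
  map_le p _ := by split_ifs <;> omega
  injOn p hp q hq hpq := by
    simp only [Set.mem_Iic] at hp hq
    beta_reduce at hpq
    split_ifs at hpq <;> omega
  map_zero := by split_ifs <;> omega
  not_r_zero := by omega
  preservesAdjacencyAt p _ hp := by
    simp only [mem_insert, mem_singleton] at hp
    unfold PreservesAdjacencyAt
    beta_reduce
    split_ifs <;> omega

end Operations

def RearrOp.maxGain : RearrOp → ℕ
  | .rev => 2
  | _ => 3

open Classical in
theorem exists_isSignedReindexing_of_sOpRel {n : ℕ} {op : RearrOp} {σ τ : ℕ → ℤ}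
    (h : sOpRel n op σ τ) :
    ∃ f r J, IsSignedReindexing n σ τ f r J ∧ #J ≤ op.maxGain ∧
      (op ≠ .transp → 1 < #{p ∈ range (n + 1) | ¬ (r p ↔ r (p + 1))}) := by
  cases op with
  | rev =>
    obtain ⟨i, j, hi, hij, hj, hin, hout⟩ := h
    refine ⟨_, _, _, isSignedReindexing_rev hi hij hj hin hout, card_le_two, fun _ => ?_⟩
    exact one_lt_card_iff.2 ⟨i - 1, j, by simp only [mem_filter, mem_range]; omega⟩
  | transp =>
    obtain ⟨i, j, k, hi, hij, hjk, hk, hleft, hright, hout⟩ := h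
    exact ⟨_, _, _, isSignedReindexing_transp hi hij hjk hk hleft hright hout, card_le_three,
      fun h => absurd rfl h⟩
  | invtransp =>
    obtain ⟨i, j, k, hi, hij, hjk, hk, ⟨hleft, hright⟩ | ⟨hleft, hright⟩, hout⟩ := h
    · refine ⟨_, _, _, isSignedReindexing_invtransp_right hi hij hjk hk hleft hright hout,
        card_le_three, fun _ => ?_⟩
      exact one_lt_card_iff.2 ⟨i + (k - j) - 1, k - 1,
        by simp only [mem_filter, mem_range]; omega⟩
    · refine ⟨_, _, _, isSignedReindexing_invtransp_left hi hij hjk hk hleft hright hout,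
        card_le_three, fun _ => ?_⟩
      exact one_lt_card_iff.2 ⟨i - 1, i + (k - j) - 1,
        by simp only [mem_filter, mem_range]; omega⟩
  | revrev =>
    obtain ⟨i, j, k, hi, hij, hjk, hk, hleft, hright, hout⟩ := h
    refine ⟨_, _, _, isSignedReindexing_revrev hi hij hjk hk hleft hright hout, card_le_three,
      fun _ => ?_⟩
    exact one_lt_card_iff.2 ⟨i - 1, k - 1, by simp only [mem_filter, mem_range]; omega⟩

section Breakpoints

variable {n : ℕ} {op : RearrOp} {σ τ : ℕ → ℤ}

theorem bS_le_bS_add_maxGain (h : sOpRel n op σ τ) : bS n σ ≤ bS n τ + op.maxGain := by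
  obtain ⟨f, r, J, hre, hJ, -⟩ := exists_isSignedReindexing_of_sOpRel h
  have := hre.bS_add_card_le
  omega

theorem bS_add_two_le_of_ne_transp (hσ₀ : ∀ q ≤ n + 1, 0 ≤ σ q)
    (hσ₁ : ∀ q, 1 ≤ q → q ≤ n + 1 → 1 ≤ σ q) (hop : op ≠ .transp) (h : sOpRel n op σ τ) :
    bS n σ + 2 ≤ bS n τ + op.maxGain := by
  obtain ⟨f, r, J, hre, hJ, hsign⟩ := exists_isSignedReindexing_of_sOpRel h
  have := hre.bS_add_card_signChanges_le hσ₀ hσ₁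
  have := hsign hop
  omega

theorem bS_eq_zero (h : ∀ p ≤ n + 1, σ p = p) : bS n σ = 0 := by
  refine card_eq_zero.2 (filter_eq_empty_iff.2 fun p hp => ?_)
  rw [mem_range] at hp
  rw [h p (by omega), h (p + 1) (by omega)]
  simp

end Breakpoints

def RearrOp.weight (wr wt : ℝ) : RearrOp → ℝ
  | .rev => wr
  | _ => wt

def listWeight (wr wt : ℝ) (l : List RearrOp) : ℝ :=
  (l.map (RearrOp.weight wr wt)).sum

section Weights

variable {wr wt : ℝ}

theorem seqCost_eq_ofReal_listWeight (hwr : 0 ≤ wr) (hwt : 0 ≤ wt) (l : List RearrOp) :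
    seqCost wr wt l = ENNReal.ofReal (listWeight wr wt l) := by
  have hop : ∀ op : RearrOp, opCost wr wt op = ENNReal.ofReal (op.weight wr wt) := by
    intro op; cases op <;> rfl
  have hnn : ∀ op : RearrOp, 0 ≤ op.weight wr wt := by
    intro op; cases op <;> assumption
  induction l with
  | nil => simp [seqCost, listWeight]
  | cons op l ih =>
    simp only [seqCost, listWeight, List.map_cons, List.sum_cons] at ih ⊢
    rw [ih, hop,
      ENNReal.ofReal_add (hnn op) (List.sum_nonneg (by simpa using fun op _ => hnn op))]

variable {n : ℕ}

theorem wt_mul_bS_le_of_sSorts (hwt : 0 ≤ wt) (hr : 2 * wt ≤ 3 * wr) :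
    ∀ {l : List RearrOp} {σ : ℕ → ℤ}, SSorts n l σ → wt * bS n σ ≤ 3 * listWeight wr wt l
  | [], σ, h => by simp [bS_eq_zero h, listWeight]
  | op :: l, σ, ⟨τ, hop, hl⟩ => by
    have htail := wt_mul_bS_le_of_sSorts hwt hr hl
    have hgain : (bS n σ : ℝ) ≤ bS n τ + op.maxGain := by exact_mod_cast bS_le_bS_add_maxGain hop
    have hcost : wt * op.maxGain ≤ 3 * op.weight wr wt := by
      cases op <;> simp only [RearrOp.maxGain, RearrOp.weight] <;> push_cast <;> linarith
    simp only [listWeight, List.map_cons, List.sum_cons] at htail ⊢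
    nlinarith

theorem wt_mul_bS_add_le_of_ne_transp {op : RearrOp} {σ τ : ℕ → ℤ} (hwt : 0 ≤ wt)
    (hr : 2 * wt ≤ 3 * wr) (hσ₀ : ∀ q ≤ n + 1, 0 ≤ σ q) (hσ₁ : ∀ q, 1 ≤ q → q ≤ n + 1 → 1 ≤ σ q)
    (hop : op ≠ .transp) (h : sOpRel n op σ τ) :
    wt * bS n σ + wt ≤ 3 * op.weight wr wt + wt * bS n τ := by
  have hgain : (bS n σ : ℝ) + 2 ≤ bS n τ + op.maxGain := by
    exact_mod_cast bS_add_two_le_of_ne_transp hσ₀ hσ₁ hop h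
  have := mul_le_mul_of_nonneg_left hgain hwt
  cases op <;> simp only [RearrOp.maxGain, RearrOp.weight] at this ⊢ <;> push_cast at this <;>
    first | exact absurd rfl hop | linarith

end Weights

section Unsigned

variable {n : ℕ}

theorem bS_natCast (π : ℕ → ℕ) : bS n (fun p => (π p : ℤ)) = bTU n π := by
  unfold bS bTU
  congr 1
  exact filter_congr fun p _ => by dsimp only; omega

theorem sTransp_natCast_iff {π π₁ : ℕ → ℕ} :
    STransp n (fun p => (π p : ℤ)) (fun p => (π₁ p : ℤ)) ↔ UTransp n π π₁ := by
  simp only [STransp, UTransp, Nat.cast_inj]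

theorem STransp.exists_apply_eq {σ τ : ℕ → ℤ} (h : STransp n σ τ) (p : ℕ) :
    ∃ q, τ p = σ q ∧ (1 ≤ p → p ≤ n + 1 → 1 ≤ q ∧ q ≤ n + 1) := by
  obtain ⟨i, j, k, hi, hij, hjk, hk, hleft, hright, hout⟩ := h
  by_cases h₁ : i ≤ p ∧ p < i + (k - j)
  · exact ⟨_, hleft p h₁.1 h₁.2, fun _ _ => by omega⟩
  by_cases h₂ : i + (k - j) ≤ p ∧ p < k
  · exact ⟨_, hright p h₂.1 h₂.2, fun _ _ => by omega⟩
  exact ⟨p, hout p (by omega), fun h h' => ⟨h, h'⟩⟩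

theorem exists_uTransp_of_sTransp_natCast {π : ℕ → ℕ} {τ : ℕ → ℤ}
    (h : STransp n (fun p => (π p : ℤ)) τ) :
    ∃ π₁ : ℕ → ℕ, τ = (fun p => (π₁ p : ℤ)) ∧ UTransp n π π₁ := by
  have hτ : τ = fun p => ((τ p).toNat : ℤ) := funext fun p => by
    obtain ⟨q, hq, -⟩ := h.exists_apply_eq p
    simp [hq]
  exact ⟨_, hτ, sTransp_natCast_iff.1 (hτ ▸ h)⟩

theorem UTransp.one_le_apply {π π₁ : ℕ → ℕ} (h : UTransp n π π₁)
    (hπ : ∀ p, 1 ≤ p → p ≤ n + 1 → 1 ≤ π p) : ∀ p, 1 ≤ p → p ≤ n + 1 → 1 ≤ π₁ p := by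
  intro p hp hp'
  obtain ⟨q, hq, hq'⟩ := (sTransp_natCast_iff.2 h).exists_apply_eq p
  have := hπ q (hq' hp hp').1 (hq' hp hp').2
  simp only [Nat.cast_inj] at hq
  omega

theorem sSorts_replicate_transp {π : ℕ → ℕ} :
    ∀ {s : ℕ}, UTranspSorts n s π →
      SSorts n (List.replicate s .transp) (fun p => (π p : ℤ))
  | 0, h => fun p hp => by simp [h p hp]
  | _ + 1, ⟨_, hU, hs⟩ => ⟨_, sTransp_natCast_iff.2 hU, sSorts_replicate_transp hs⟩

theorem uTranspSorts_of_listWeight_lt {wr wt : ℝ} (hwt : 0 < wt) (hr : 2 * wt ≤ 3 * wr) :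
    ∀ {l : List RearrOp} {π : ℕ → ℕ}, (∀ p, 1 ≤ p → p ≤ n + 1 → 1 ≤ π p) →
      SSorts n l (fun p => (π p : ℤ)) → 3 * listWeight wr wt l < wt * (bTU n π + 1) →
      UTranspSorts n l.length π ∧ 3 * l.length = bTU n π
  | [], π, _, hl, _ => by
    have hid : ∀ p ≤ n + 1, π p = p := fun p hp => by simpa using hl p hp
    refine ⟨hid, ?_⟩
    rw [← bS_natCast, bS_eq_zero hl]; rfl
  | op :: l, π, hπ, ⟨τ, hop, hl⟩, hcost => by
    have htail := wt_mul_bS_le_of_sSorts hwt.le hr hl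
    simp only [listWeight, List.map_cons, List.sum_cons] at hcost htail
    by_cases hop_t : op = .transp
    · subst hop_t
      have hT : STransp n (fun p => (π p : ℤ)) τ := hop
      obtain ⟨π₁, rfl, hU⟩ := exists_uTransp_of_sTransp_natCast hT
      have hgain : bTU n π ≤ bTU n π₁ + 3 := by
        simpa only [bS_natCast, RearrOp.maxGain] using bS_le_bS_add_maxGain hop
      rw [bS_natCast] at htail
      have hdrop : bTU n π = bTU n π₁ + 3 := by
        have : wt * (bTU n π₁ + 2 : ℝ) < wt * bTU n π := by
          simp only [RearrOp.weight] at hcost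
          linarith
        have := lt_of_mul_lt_mul_left this hwt.le
        norm_cast at this
        omega
      obtain ⟨hs, hlen⟩ := uTranspSorts_of_listWeight_lt hwt hr (hU.one_le_apply hπ) hl (by
        simp only [RearrOp.weight, listWeight] at hcost htail ⊢
        rw [hdrop] at hcost
        push_cast at hcost
        linarith)
      exact ⟨⟨π₁, hU, hs⟩, by simp only [List.length_cons]; omega⟩
    · exfalso
      have := wt_mul_bS_add_le_of_ne_transp hwt.le hr (fun q _ => Int.natCast_nonneg _)
        (fun q hq hq' => by exact_mod_cast hπ q hq hq') hop_t hop
      rw [bS_natCast] at this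
      linarith

end Unsigned

section Distance

variable {n : ℕ} {wr wt : ℝ}

theorem sWDist_M6_le_of_uTranspSorts {s : ℕ} {π : ℕ → ℕ} (h : UTranspSorts n s π) :
    sWDist n M6 wr wt (fun p => (π p : ℤ)) ≤ s * ENNReal.ofReal wt := by
  refine sInf_le ⟨_, fun op hop => ?_, sSorts_replicate_transp h, ?_⟩
  · rw [List.eq_of_mem_replicate hop]
    simp [M6]
  · simp [seqCost, opCost, List.sum_replicate]

theorem exists_sSorts_listWeight_lt (hwr : 0 ≤ wr) (hwt : 0 < wt) {M : Set RearrOp}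
    {σ : ℕ → ℤ} {b : ℝ} (hb : 0 ≤ b) (H : 3 * sWDist n M wr wt σ ≤ ENNReal.ofReal (wt * b)) :
    ∃ l, SSorts n l σ ∧ 3 * listWeight wr wt l < wt * (b + 1) := by
  have hlt : sWDist n M wr wt σ < ENNReal.ofReal (wt * (b + 1) / 3) := by
    by_contra! hge
    have : ENNReal.ofReal (wt * (b + 1)) ≤ ENNReal.ofReal (wt * b) :=
      calc ENNReal.ofReal (wt * (b + 1)) = 3 * ENNReal.ofReal (wt * (b + 1) / 3) := by
            rw [← ENNReal.ofReal_ofNat 3, ← ENNReal.ofReal_mul (by norm_num)]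
            ring_nf
        _ ≤ 3 * sWDist n M wr wt σ := by gcongr
        _ ≤ ENNReal.ofReal (wt * b) := H
    rw [ENNReal.ofReal_le_ofReal_iff (by positivity)] at this
    linarith
  obtain ⟨_, ⟨l, -, hl, rfl⟩, hcost⟩ := sInf_lt_iff.1 hlt
  rw [seqCost_eq_ofReal_listWeight hwr hwt.le, ENNReal.ofReal_lt_ofReal_iff'] at hcost
  exact ⟨l, hl, by linarith [hcost.1]⟩

end Distance

/-- Let `π` be an unsigned permutation of size `n` with `b_τ(π)`
transposition breakpoints, let `π'` be the signed permutation obtained by giving every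
element of `π` the sign `+`, and let `w_ρ, w_τ` be positive weights with
`w_τ/w_ρ ≤ 3/2`. Then there exists a sequence `S` of transpositions transforming `π`
into the identity with `3·|S| = b_τ(π)` if and only if
`3·d^w_{M6}(π') ≤ w_τ · b_τ(π)`. -/
theorem transposition_sorting_iff_weighted_signed_distance
    (n : ℕ) (π : ℕ → ℕ) (hπ : IsUPerm n π)
    (wr wt : ℝ) (hwr : 0 < wr) (hwt : 0 < wt) (hratio : wt / wr ≤ 3 / 2) :
    (∃ s : ℕ, UTranspSorts n s π ∧ 3 * s = bTU n π) ↔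
      3 * sWDist n M6 wr wt (fun p => (π p : ℤ)) ≤
        ENNReal.ofReal (wt * (bTU n π : ℝ)) := by
  obtain ⟨-, hlast, hrange, -⟩ := hπ
  have hr : 2 * wt ≤ 3 * wr := by
    rw [div_le_div_iff₀ hwr (by norm_num)] at hratio
    linarith
  have hpos : ∀ p, 1 ≤ p → p ≤ n + 1 → 1 ≤ π p := fun p hp hp' => by
    rcases Nat.lt_or_ge p (n + 1) with h | h
    · exact (hrange p hp (by omega)).1
    · rw [show p = n + 1 by omega, hlast]
      omega
  constructor
  · rintro ⟨s, hs, hb⟩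
    calc 3 * sWDist n M6 wr wt (fun p => (π p : ℤ)) ≤ 3 * (s * ENNReal.ofReal wt) := by
          gcongr
          exact sWDist_M6_le_of_uTranspSorts hs
      _ = ENNReal.ofReal (wt * (bTU n π : ℝ)) := by
          rw [← hb, ENNReal.ofReal_mul hwt.le, ENNReal.ofReal_natCast]
          push_cast
          ring
  · intro H
    obtain ⟨l, hl, hcost⟩ := exists_sSorts_listWeight_lt hwr.le hwt (Nat.cast_nonneg _) H
    obtain ⟨hs, hb⟩ := uTranspSorts_of_listWeight_lt hwt hr hpos hl hcost
    exact ⟨l.length, hs, hb⟩
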